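/- arXiv:math/0607629 — 2 statements merged into one kernel-verified Lean document; each statement's English description precedes it below -/
import Mathlib

section
/- For each n ≥ 0, the action (a ⊗ a′ ⊗ b)(a₀ ⊗ ⋯ ⊗ a_{n+1}) = Σ a b₍₁₎a₀ ⊗ b₍₂₎a₁ ⊗ ⋯ ⊗ b₍ₙ₊₁₎aₙ ⊗ b₍ₙ₊₂₎a_{n+1}a′ makes the vector space A^{⊗(n+2)} into a left module over the crossed product algebra X = A ⊗ A ⊗ H. -/
open TensorProduct

noncomputable section ModuleAlgebraDeligne

universe u

variable (K A H : Type u)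

/-- An `H`-module-algebra structure on `A`: an `H`-action by `K`-linear maps making `A`
an `H`-module, such that multiplication and unit of `A` are `H`-linear
(the Sweedler sum `∑ (b₍₁₎a₁)(b₍₂₎a₂)` is expressed via `Coalgebra.comul`). -/
structure ModAlg [Field K] [Ring A] [Algebra K A] [Ring H] [Bialgebra K H] where
  act : H →ₗ[K] A →ₗ[K] A
  act_one : ∀ a : A, act 1 a = a
  act_mul : ∀ (b c : H) (a : A), act (b * c) a = act b (act c a)
  act_unit : ∀ b : H, act b (1 : A) = (Coalgebra.counit (R := K) b) • (1 : A)
  act_alg : ∀ (b : H) (a₁ a₂ : A),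
    act b (a₁ * a₂) =
      LinearMap.mul' K A
        ((TensorProduct.homTensorHomMap (RingHom.id K) A A A A)
          (TensorProduct.map act act (Coalgebra.comul (R := K) b)) (a₁ ⊗ₜ[K] a₂))

variable [Field K] [Ring A] [Algebra K A] [Ring H] [Bialgebra K H]

/-- The defining formula of the crossed product multiplication on `X = A ⊗ A ⊗ H`:
`(a₁ ⊗ a₁' ⊗ b¹)(a₂ ⊗ a₂' ⊗ b²) = ∑ a₁(b¹₍₁₎a₂) ⊗ (b¹₍₃₎a₂')a₁' ⊗ b¹₍₂₎b²`. -/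
def XMulFormula (act : H →ₗ[K] A →ₗ[K] A)
    (mul : (A ⊗[K] (A ⊗[K] H)) →ₗ[K] (A ⊗[K] (A ⊗[K] H)) →ₗ[K] (A ⊗[K] (A ⊗[K] H))) :
    Prop :=
  ∀ (a₁ a₁' : A) (b₁ : H) (a₂ a₂' : A) (b₂ : H),
    mul (a₁ ⊗ₜ[K] (a₁' ⊗ₜ[K] b₁)) (a₂ ⊗ₜ[K] (a₂' ⊗ₜ[K] b₂)) =
      TensorProduct.map
        (LinearMap.mulLeft K a₁ ∘ₗ act.flip a₂)
        ((TensorProduct.map (LinearMap.mulRight K a₁' ∘ₗ act.flip a₂')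
            (LinearMap.mulRight K b₂)) ∘ₗ (TensorProduct.comm K H H).toLinearMap)
        ((LinearMap.lTensor H (Coalgebra.comul (R := K)) ∘ₗ Coalgebra.comul (R := K)) b₁)

/-- Iterated tensor power `A^{⊗(n+1)}` (so `Tpow K A n` has `n+1` tensor factors),
bundled with its module structure. -/
def TpowAux : ℕ → Σ' (T : Type u) (_ : AddCommGroup T), Module K T
  | 0 => ⟨A, inferInstance, inferInstance⟩
  | n + 1 =>
    letI T := TpowAux n
    letI : AddCommGroup T.1 := T.2.1
    letI : Module K T.1 := T.2.2
    ⟨A ⊗[K] T.1, inferInstance, inferInstance⟩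

/-- `Tpow K A n = A^{⊗(n+1)}`. -/
def Tpow (n : ℕ) : Type u := (TpowAux K A n).1

instance instTpowAuxACG (n : ℕ) : AddCommGroup (TpowAux K A n).1 := (TpowAux K A n).2.1
instance instTpowAuxMod (n : ℕ) : Module K (TpowAux K A n).1 := (TpowAux K A n).2.2
instance (n : ℕ) : AddCommGroup (Tpow K A n) := (TpowAux K A n).2.1
instance (n : ℕ) : Module K (Tpow K A n) := (TpowAux K A n).2.2

/-- Cast between equal tensor powers (identity when `m = n`, junk `0` otherwise). -/
def tmap (m n : ℕ) : Tpow K A m →ₗ[K] Tpow K A n :=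
  if h : m = n then by subst h; exact LinearMap.id else 0

/-- Left multiplication by an element of `A` on the first tensor factor. -/
def lmulL : ∀ n : ℕ, A →ₗ[K] Tpow K A n →ₗ[K] Tpow K A n
  | 0 => LinearMap.mul K A
  | n + 1 =>
    (LinearMap.rTensorHom (R := K) (M := Tpow K A n) (N := A) (P := A)) ∘ₗ
      LinearMap.mul K A

/-- Right multiplication by an element of `A` on the last tensor factor. -/
def rmulL : ∀ n : ℕ, A →ₗ[K] Tpow K A n →ₗ[K] Tpow K A n
  | 0 => (LinearMap.mul K A).flip
  | n + 1 =>
    (LinearMap.lTensorHom (R := K) (M := A) (N := Tpow K A n) (P := Tpow K A n)) ∘ₗ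
      rmulL n

/-- Componentwise action of `H^{⊗(n+1)}` on `A^{⊗(n+1)}` induced by an action of `H` on `A`. -/
def tact (act : H →ₗ[K] A →ₗ[K] A) :
    ∀ n : ℕ, Tpow K H n →ₗ[K] Tpow K A n →ₗ[K] Tpow K A n
  | 0 => act
  | n + 1 =>
    (TensorProduct.homTensorHomMap (RingHom.id K) A (Tpow K A n) A (Tpow K A n)) ∘ₗ
      TensorProduct.map act (tact act n)

/-- Iterated comultiplication `Δⁿ : H → H^{⊗(n+1)}`. -/
def itComul : ∀ n : ℕ, H →ₗ[K] Tpow K H n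
  | 0 => LinearMap.id
  | n + 1 => LinearMap.lTensor H (itComul n) ∘ₗ Coalgebra.comul (R := K)

/-- The action of the pure tensor `a ⊗ a' ⊗ b ∈ X = A ⊗ A ⊗ H` on `A^{⊗(n+1)}`:
`(a ⊗ a' ⊗ b)(a₀ ⊗ ⋯ ⊗ aₙ) = ∑ a b₍₁₎a₀ ⊗ b₍₂₎a₁ ⊗ ⋯ ⊗ b₍ₙ₊₁₎aₙ a'`. -/
def xActP (act : H →ₗ[K] A →ₗ[K] A) (n : ℕ) (a a' : A) (b : H) :
    Tpow K A n →ₗ[K] Tpow K A n :=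
  lmulL K A n a ∘ₗ rmulL K A n a' ∘ₗ tact K A H act n (itComul K H n b)

/-- `X`-linearity (equivariance with respect to all pure tensors of `X = A ⊗ A ⊗ H`)
of a degree-`m` Hopf-Hochschild cochain `g : A^{⊗(m+2)} → A`. -/
def IsXLinear (act : H →ₗ[K] A →ₗ[K] A) (m : ℕ) (g : Tpow K A (m + 1) →ₗ[K] A) : Prop :=
  ∀ (a a' : A) (b : H) (t : Tpow K A (m + 1)),
    g (xActP K A H act (m + 1) a a' b t) = a * act b (g t) * a'

/-- Append an element of `A` as a new last tensor factor. -/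
def appendA : ∀ n : ℕ, A →ₗ[K] Tpow K A n →ₗ[K] Tpow K A (n + 1)
  | 0 => (TensorProduct.mk K A A).flip
  | n + 1 =>
    (LinearMap.lTensorHom (R := K) (M := A) (N := Tpow K A n) (P := Tpow K A (n + 1))) ∘ₗ
      appendA n

/-- The "inner part" `g(1 ⊗ - ⊗ 1) : A^{⊗n} → A` of a cochain `g : A^{⊗(n+2)} → A`. -/
def innerC {n : ℕ} (g : Tpow K A (n + 2) →ₗ[K] A) : Tpow K A n →ₗ[K] A :=
  g ∘ₗ TensorProduct.mk K A (Tpow K A (n + 1)) 1 ∘ₗ appendA K A n 1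

/-- Consume the first `n+1` tensor factors of `A^{⊗(S+n+2)}` using a map `A^{⊗(n+1)} → A`,
leaving the remaining `A^{⊗(S+1)}`. -/
def consume : ∀ n S : ℕ,
    (Tpow K A n →ₗ[K] A) →ₗ[K] (Tpow K A (S + n + 1) →ₗ[K] A ⊗[K] Tpow K A S)
  | 0, S => LinearMap.rTensorHom (R := K) (M := Tpow K A S) (N := A) (P := A)
  | n + 1, S =>
    (TensorProduct.lift.equiv (RingHom.id K) A (Tpow K A (S + n + 1)) (A ⊗[K] Tpow K A S)).toLinearMap ∘ₗ
      (LinearMap.llcomp K A (Tpow K A n →ₗ[K] A)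
          (Tpow K A (S + n + 1) →ₗ[K] A ⊗[K] Tpow K A S) (consume n S)) ∘ₗ
        TensorProduct.lcurry (RingHom.id K) A (Tpow K A n) A

/-- An operadic "entry": a Hopf-Hochschild cochain of degree `m`,
i.e. a linear map `A^{⊗(m+2)} → A`. -/
def Entry : Type u := Σ' m : ℕ, Tpow K A (m + 1) →ₗ[K] A

/-- Total degree of a list of entries. -/
def sumA : List (Entry K A) → ℕ
  | [] => 0
  | e :: l => sumA l + e.1

/-- The block-substitution map underlying the operad structure maps `γ`. -/
def gammaAux : ∀ l : List (Entry K A), Tpow K A (sumA K A l) →ₗ[K] Tpow K A l.length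
  | [] => LinearMap.id
  | ⟨0, _⟩ :: _ => 0
  | ⟨n + 1, g⟩ :: l =>
    LinearMap.lTensor A (gammaAux l) ∘ₗ consume K A n (sumA K A l) (innerC K A g)

/-- The operad structure map `γ(f; g₁, …, g_k)` of the Hopf-Hochschild cochain operad. -/
def gamma (l : List (Entry K A)) (f : Tpow K A (l.length + 1) →ₗ[K] A) :
    Tpow K A (sumA K A l + 1) →ₗ[K] A :=
  f ∘ₗ LinearMap.lTensor A (gammaAux K A l)

/-- `γ(f; g₁, …, g_k)` with degree bookkeeping by casts: `f` has degree `k`,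
the result is regarded as a map on `Tpow K A M = A^{⊗(M+1)}`
(the casts are identities in every intended use, where `l.length = k`
and `M = sumA l + 1`). -/
def gammaD (k : ℕ) (f : Tpow K A (k + 1) →ₗ[K] A) (l : List (Entry K A)) (M : ℕ) :
    Tpow K A M →ₗ[K] A :=
  gamma K A l (f ∘ₗ tmap K A (l.length + 1) (k + 1)) ∘ₗ tmap K A M (sumA K A l + 1)

/-- The identity cochain `Id ∈ C(1)`, `a₀ ⊗ a₁ ⊗ a₂ ↦ a₀a₁a₂`. -/
def idC : Tpow K A 2 →ₗ[K] A :=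
  LinearMap.mul' K A ∘ₗ LinearMap.lTensor A (LinearMap.mul' K A)

/-- `Id` as an entry. -/
def idE : Entry K A := ⟨1, idC K A⟩

/-- The multiplication cochain `π ∈ C(2)`, `a₀ ⊗ a₁ ⊗ a₂ ⊗ a₃ ↦ a₀a₁a₂a₃`. -/
def piC : Tpow K A 3 →ₗ[K] A :=
  LinearMap.mul' K A ∘ₗ
    LinearMap.lTensor A (LinearMap.mul' K A ∘ₗ LinearMap.lTensor A (LinearMap.mul' K A))

/-- The face map `∂ⱼ : A^{⊗(n+2)} → A^{⊗(n+1)}` of the bar complex. -/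
def face : ∀ n j : ℕ, Tpow K A (n + 1) →ₗ[K] Tpow K A n
  | n, 0 => TensorProduct.lift (lmulL K A n)
  | 0, _ + 1 => TensorProduct.lift (lmulL K A 0)
  | n + 1, j + 1 => LinearMap.lTensor A (face n j)

/-- The bar differential `d_n = ∑_{j=0}^n (−1)ʲ ∂ⱼ : A^{⊗(n+2)} → A^{⊗(n+1)}`. -/
def barDiff (n : ℕ) : Tpow K A (n + 1) →ₗ[K] Tpow K A n :=
  ∑ j ∈ Finset.range (n + 1), (-1 : K) ^ j • face K A n j

end ModuleAlgebraDeligne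

/-!
`H` acts on `A^{⊗(m+1)}` through the iterated coproduct, `θ(b) = Σ b₍₁₎ ⊗ ⋯ ⊗ b₍ₘ₊₁₎`, by an
algebra homomorphism, and `a ⊗ a' ⊗ b` acts as `L_a R_{a'} θ(b)`, where `L` and `R` multiply the
first and the last factor. Since multiplication in `A` is `H`-linear, induction on the number of
factors together with coassociativity gives `θ(b) L_a = Σ L_{b₍₁₎a} θ(b₍₂₎)` and
`θ(b) R_{a'} = Σ R_{b₍₂₎a'} θ(b₍₁₎)`. As `L` and `R` commute, moving `θ(b¹)` past `L_{a₂} R_{a₂'}`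
produces `Σ L_{b¹₍₁₎a₂} R_{b¹₍₃₎a₂'} θ(b¹₍₂₎)`, which is exactly the crossed product rule.
-/

open Coalgebra

namespace Tpow

variable {K A : Type u} [Field K] [Ring A] [Algebra K A]

def onHead (m : ℕ) : Module.End K A →ₐ[K] Module.End K (Tpow K A (m + 1)) :=
  Module.End.rTensorAlgHom K A (Tpow K A m)

def onTail (m : ℕ) : Module.End K (Tpow K A m) →ₐ[K] Module.End K (Tpow K A (m + 1)) :=
  Module.End.lTensorAlgHom K (Tpow K A m) A

lemma commute_onHead_onTail (m : ℕ) (f : Module.End K A) (g : Module.End K (Tpow K A m)) :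
    Commute (onHead m f) (onTail m g) :=
  (LinearMap.rTensor_comp_lTensor (M := A) f g).trans
    (LinearMap.lTensor_comp_rTensor (M := A) (N := Tpow K A m) f g).symm

end Tpow

open Tpow

section MulOperators

variable {K A : Type u} [Field K] [Ring A] [Algebra K A]

lemma lmulL_succ (m : ℕ) (a : A) :
    lmulL K A (m + 1) a = onHead m (LinearMap.mulLeft K a) := rfl

lemma rmulL_succ (m : ℕ) (a : A) : rmulL K A (m + 1) a = onTail m (rmulL K A m a) := rfl

lemma lmulL_one (m : ℕ) : lmulL K A m 1 = 1 := by
  cases m with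
  | zero => exact LinearMap.ext fun (x : A) => one_mul x
  | succ m => rw [lmulL_succ, LinearMap.mulLeft_one, ← Module.End.one_eq_id, map_one]

lemma lmulL_mul (m : ℕ) (a b : A) : lmulL K A m (a * b) = lmulL K A m a * lmulL K A m b := by
  cases m with
  | zero => exact LinearMap.ext fun (x : A) => mul_assoc a b x
  | succ m => rw [lmulL_succ, LinearMap.mulLeft_mul, ← Module.End.mul_eq_comp, map_mul]; rfl

lemma rmulL_one (m : ℕ) : rmulL K A m 1 = 1 := by
  induction m with
  | zero => exact LinearMap.ext fun (x : A) => mul_one x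
  | succ m ih => rw [rmulL_succ, ih, map_one]

lemma rmulL_mul (m : ℕ) (a b : A) : rmulL K A m (a * b) = rmulL K A m b * rmulL K A m a := by
  induction m with
  | zero => exact LinearMap.ext fun (x : A) => (mul_assoc x a b).symm
  | succ m ih => rw [rmulL_succ, ih, map_mul]; rfl

lemma commute_lmulL_rmulL (m : ℕ) (a a' : A) : Commute (lmulL K A m a) (rmulL K A m a') := by
  cases m with
  | zero => exact LinearMap.ext fun (x : A) => (mul_assoc a x a').symm
  | succ m => exact commute_onHead_onTail m _ _

end MulOperators

namespace ModAlg

variable {K A H : Type u} [Field K] [Ring A] [Algebra K A] [Ring H] [Bialgebra K H]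

lemma act_mul_eq_sum (M : ModAlg K A H) {ι : Type*} {b : H} (𝓡 : Repr K b ι) (x y : A) :
    M.act b (x * y) = ∑ i ∈ 𝓡.index, M.act (𝓡.left i) x * M.act (𝓡.right i) y := by
  simp [M.act_alg, ← 𝓡.eq, map_sum]

def actAlgHom (M : ModAlg K A H) : H →ₐ[K] Module.End K A :=
  AlgHom.ofLinearMap M.act (LinearMap.ext M.act_one) fun b c => LinearMap.ext (M.act_mul b c)

def headTailAct (M : ModAlg K A H) (m : ℕ) (θ : H →ₐ[K] Module.End K (Tpow K A m)) :
    H ⊗[K] H →ₐ[K] Module.End K (Tpow K A (m + 1)) :=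
  Algebra.TensorProduct.lift ((onHead m).comp M.actAlgHom) ((onTail m).comp θ)
    fun _ _ => commute_onHead_onTail m _ _

lemma headTailAct_tmul (M : ModAlg K A H) (m : ℕ) (θ : H →ₐ[K] Module.End K (Tpow K A m))
    (x y : H) : M.headTailAct m θ (x ⊗ₜ y) = onHead m (M.act x) * onTail m (θ y) :=
  Algebra.TensorProduct.lift_tmul _ _ _ x y

def diagAct (M : ModAlg K A H) : ∀ m : ℕ, H →ₐ[K] Module.End K (Tpow K A m)
  | 0 => M.actAlgHom
  | m + 1 => (M.headTailAct m (M.diagAct m)).comp (Bialgebra.comulAlgHom K H)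

lemma diagAct_succ_apply (M : ModAlg K A H) (m : ℕ) (b : H) :
    M.diagAct (m + 1) b = M.headTailAct m (M.diagAct m) (comul b) := rfl

lemma diagAct_succ_eq_sum (M : ModAlg K A H) (m : ℕ) {ι : Type*} {b : H} (𝓡 : Repr K b ι) :
    M.diagAct (m + 1) b =
      ∑ i ∈ 𝓡.index, onHead m (M.act (𝓡.left i)) * onTail m (M.diagAct m (𝓡.right i)) := by
  simp only [diagAct_succ_apply, ← 𝓡.eq, map_sum, headTailAct_tmul]

lemma tact_itComul (M : ModAlg K A H) (m : ℕ) (b : H) :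
    tact K A H M.act m (itComul K H m b) = M.diagAct m b := by
  induction m generalizing b with
  | zero => rfl
  | succ m ih =>
    have h : tact K A H M.act (m + 1) ∘ₗ LinearMap.lTensor H (itComul K H m) =
        (M.headTailAct m (M.diagAct m)).toLinearMap := by
      refine TensorProduct.ext' fun x y => ?_
      change TensorProduct.map (M.act x) (tact K A H M.act m (itComul K H m y)) = _
      rw [ih, AlgHom.toLinearMap_apply, headTailAct_tmul]
      exact (LinearMap.rTensor_comp_lTensor (M := A) _ _).symm
    exact LinearMap.congr_fun h (comul b)

lemma xActP_eq (M : ModAlg K A H) (m : ℕ) (a a' : A) (b : H) :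
    xActP K A H M.act m a a' b = lmulL K A m a * rmulL K A m a' * M.diagAct m b := by
  rw [xActP, tact_itComul]
  rfl

lemma act_mul_mulLeft (M : ModAlg K A H) (a : A) {ι : Type*} {b : H} (𝓡 : Repr K b ι) :
    M.act b * LinearMap.mulLeft K a =
      ∑ i ∈ 𝓡.index, LinearMap.mulLeft K (M.act (𝓡.left i) a) * M.act (𝓡.right i) := by
  ext x
  simp [M.act_mul_eq_sum 𝓡]

lemma act_mul_mulRight (M : ModAlg K A H) (a : A) {ι : Type*} {b : H} (𝓡 : Repr K b ι) :
    M.act b * LinearMap.mulRight K a =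
      ∑ i ∈ 𝓡.index, LinearMap.mulRight K (M.act (𝓡.right i) a) * M.act (𝓡.left i) := by
  ext x
  simp [M.act_mul_eq_sum 𝓡]

lemma diagAct_mul_lmulL (M : ModAlg K A H) (m : ℕ) (a : A) {ι : Type*} {b : H}
    (𝓡 : Repr K b ι) :
    M.diagAct m b * lmulL K A m a =
      ∑ i ∈ 𝓡.index, lmulL K A m (M.act (𝓡.left i) a) * M.diagAct m (𝓡.right i) := by
  cases m with
  | zero => exact M.act_mul_mulLeft a 𝓡
  | succ m =>
  let Ψ : H ⊗[K] (H ⊗[K] H) →ₗ[K] Module.End K (Tpow K A (m + 1)) :=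
    LinearMap.mul' K _ ∘ₗ TensorProduct.map
      ((onHead m).toLinearMap ∘ₗ LinearMap.mul K A ∘ₗ M.act.flip a)
      (M.headTailAct m (M.diagAct m)).toLinearMap
  -- `Ψ (x ⊗ (y ⊗ z)) = L_{x • a} (y ⊗ θ z)`: coassociativity, read through `Ψ`, regroups the
  -- double Sweedler sums on both sides.
  have coassoc := congrArg Ψ
    (sum_tmul_tmul_eq 𝓡 (fun i => ℛ K (𝓡.left i)) (fun i => ℛ K (𝓡.right i)))
  simp only [map_sum, Ψ, LinearMap.comp_apply, TensorProduct.map_tmul, LinearMap.mul'_apply,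
    AlgHom.toLinearMap_apply, LinearMap.flip_apply, headTailAct_tmul] at coassoc
  rw [M.diagAct_succ_eq_sum m 𝓡, Finset.sum_mul]
  simp_rw [M.diagAct_succ_eq_sum m (ℛ K (𝓡.right _)), Finset.mul_sum]
  convert coassoc using 2 with i
  · rw [lmulL_succ, mul_assoc, ← (commute_onHead_onTail m _ _).eq, ← mul_assoc, ← map_mul,
      M.act_mul_mulLeft a (ℛ K _), map_sum, Finset.sum_mul]
    simp only [map_mul, mul_assoc]
    rfl
  · rfl

/- `ι` lives in the universe of `H` because the induction hypothesis is used for the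
representations `ℛ K _`. -/
lemma diagAct_mul_rmulL (M : ModAlg K A H) (m : ℕ) (a' : A) {ι : Type u} {b : H}
    (𝓡 : Repr K b ι) :
    M.diagAct m b * rmulL K A m a' =
      ∑ i ∈ 𝓡.index, rmulL K A m (M.act (𝓡.right i) a') * M.diagAct m (𝓡.left i) := by
  induction m generalizing ι b with
  | zero => exact M.act_mul_mulRight a' 𝓡
  | succ m ih =>
  let Ψ : H ⊗[K] (H ⊗[K] H) →ₗ[K] Module.End K (Tpow K A (m + 1)) :=
    LinearMap.mul' K _ ∘ₗ (TensorProduct.comm K _ _).toLinearMap ∘ₗ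
      TensorProduct.map (M.headTailAct m (M.diagAct m)).toLinearMap
        ((onTail m).toLinearMap ∘ₗ rmulL K A m ∘ₗ M.act.flip a') ∘ₗ
      (TensorProduct.assoc K H H H).symm.toLinearMap
  have coassoc := congrArg Ψ
    (sum_tmul_tmul_eq 𝓡 (fun i => ℛ K (𝓡.left i)) (fun i => ℛ K (𝓡.right i)))
  simp only [map_sum, Ψ, LinearMap.comp_apply, LinearEquiv.coe_coe,
    TensorProduct.assoc_symm_tmul, TensorProduct.map_tmul, TensorProduct.comm_tmul,
    LinearMap.mul'_apply, AlgHom.toLinearMap_apply, LinearMap.flip_apply,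
    headTailAct_tmul] at coassoc
  rw [M.diagAct_succ_eq_sum m 𝓡, Finset.sum_mul]
  simp_rw [M.diagAct_succ_eq_sum m (ℛ K (𝓡.left _)), Finset.mul_sum]
  convert coassoc.symm using 2 with i
  · rw [rmulL_succ, mul_assoc, ← map_mul, ih (ℛ K _), map_sum, Finset.mul_sum]
    refine Finset.sum_congr rfl fun j _ => ?_
    rw [map_mul, ← mul_assoc, ← mul_assoc, (commute_onHead_onTail m _ _).eq]
  · rfl

lemma diagAct_mul_lmulL_mul_rmulL (M : ModAlg K A H) (m : ℕ) (a a' : A) {ι : Type*}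
    {κ : Type u} {b : H} (𝓡 : Repr K b ι) (𝓣 : ∀ i, Repr K (𝓡.right i) κ) :
    M.diagAct m b * (lmulL K A m a * rmulL K A m a') =
      ∑ i ∈ 𝓡.index, ∑ j ∈ (𝓣 i).index, lmulL K A m (M.act (𝓡.left i) a) *
        rmulL K A m (M.act ((𝓣 i).right j) a') * M.diagAct m ((𝓣 i).left j) := by
  rw [← mul_assoc, M.diagAct_mul_lmulL m a 𝓡, Finset.sum_mul]
  refine Finset.sum_congr rfl fun i _ => ?_
  rw [mul_assoc, M.diagAct_mul_rmulL m a' (𝓣 i), Finset.mul_sum]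
  simp only [mul_assoc]

lemma xActP_mul_xActP (M : ModAlg K A H) (m : ℕ) (a₁ a₁' a₂ a₂' : A) (b₁ b₂ : H) {ι : Type*}
    {κ : Type u} (𝓡 : Repr K b₁ ι) (𝓣 : ∀ i, Repr K (𝓡.right i) κ) :
    xActP K A H M.act m a₁ a₁' b₁ * xActP K A H M.act m a₂ a₂' b₂ =
      ∑ i ∈ 𝓡.index, ∑ j ∈ (𝓣 i).index, xActP K A H M.act m (a₁ * M.act (𝓡.left i) a₂)
        (M.act ((𝓣 i).right j) a₂' * a₁') ((𝓣 i).left j * b₂) := by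
  calc xActP K A H M.act m a₁ a₁' b₁ * xActP K A H M.act m a₂ a₂' b₂
      = lmulL K A m a₁ * rmulL K A m a₁' *
          (M.diagAct m b₁ * (lmulL K A m a₂ * rmulL K A m a₂')) * M.diagAct m b₂ := by
        simp only [xActP_eq, mul_assoc]
    _ = _ := by
        rw [M.diagAct_mul_lmulL_mul_rmulL m a₂ a₂' 𝓡 𝓣, Finset.mul_sum, Finset.sum_mul]
        refine Finset.sum_congr rfl fun i _ => ?_
        rw [Finset.mul_sum, Finset.sum_mul]
        refine Finset.sum_congr rfl fun j _ => ?_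
        simp only [xActP_eq, lmulL_mul, rmulL_mul, map_mul, mul_assoc,
          (commute_lmulL_rmulL m _ a₁').left_comm]

end ModAlg

/-- For each `n ≥ 0`, the action
`(a ⊗ a′ ⊗ b)(a₀ ⊗ ⋯ ⊗ a_{n+1}) = Σ a b₍₁₎a₀ ⊗ b₍₂₎a₁ ⊗ ⋯ ⊗ b₍ₙ₊₂₎a_{n+1}a′`
makes `A^{⊗(n+2)}` into a left module over the crossed product algebra `X = A ⊗ A ⊗ H`. -/
theorem crossed_product_module_on_tensor_power
    {K A H : Type u} [Field K] [Ring A] [Algebra K A] [Ring H] [Bialgebra K H]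
    (M : ModAlg K A H) (n : ℕ)
    (mul : (A ⊗[K] (A ⊗[K] H)) →ₗ[K] (A ⊗[K] (A ⊗[K] H)) →ₗ[K] (A ⊗[K] (A ⊗[K] H)))
    (hmul : XMulFormula K A H M.act mul)
    (ρ : (A ⊗[K] (A ⊗[K] H)) →ₗ[K] Tpow K A (n + 1) →ₗ[K] Tpow K A (n + 1))
    (hρ : ∀ (a a' : A) (b : H),
      ρ (a ⊗ₜ[K] (a' ⊗ₜ[K] b)) = xActP K A H M.act (n + 1) a a' b) :
    ρ ((1 : A) ⊗ₜ[K] ((1 : A) ⊗ₜ[K] (1 : H))) = LinearMap.id ∧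
    ∀ x y : A ⊗[K] (A ⊗[K] H), ρ (mul x y) = ρ x ∘ₗ ρ y := by
  refine ⟨?_, fun x y => ?_⟩
  · rw [hρ, M.xActP_eq, lmulL_one, rmulL_one, map_one, one_mul, one_mul]
    rfl
  suffices h : mul.compr₂ ρ = (LinearMap.mul K (Module.End K (Tpow K A (n + 1)))).compl₁₂ ρ ρ from
    LinearMap.congr_fun₂ h x y
  refine TensorProduct.ext_threefold' fun a₁ a₁' b₁ =>
    TensorProduct.ext_threefold' fun a₂ a₂' b₂ => ?_
  let 𝓡 := ℛ K b₁
  have hΔ : (LinearMap.lTensor H comul ∘ₗ comul) b₁ =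
      ∑ i ∈ 𝓡.index, ∑ j ∈ (ℛ K (𝓡.right i)).index,
        𝓡.left i ⊗ₜ[K] ((ℛ K (𝓡.right i)).left j ⊗ₜ[K] (ℛ K (𝓡.right i)).right j) := by
    simp only [LinearMap.comp_apply, ← 𝓡.eq, map_sum, LinearMap.lTensor_tmul, ← (ℛ K _).eq,
      TensorProduct.tmul_sum]
  rw [LinearMap.compr₂_apply, LinearMap.compl₁₂_apply, LinearMap.mul_apply', hρ, hρ,
    M.xActP_mul_xActP (n + 1) a₁ a₁' a₂ a₂' b₁ b₂ 𝓡 (fun i => ℛ K (𝓡.right i)), hmul, hΔ]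
  simp only [map_sum, TensorProduct.map_tmul, LinearMap.comp_apply, LinearEquiv.coe_coe,
    TensorProduct.comm_tmul, LinearMap.mulLeft_apply, LinearMap.mulRight_apply,
    LinearMap.flip_apply, hρ]
end

section
/- The structure maps γ on the Hopf-Hochschild cochain modules C(n) = Hom_X(A^{⊗(n+2)}, A) are associative: γ(γ(f; g₁,…,g_k); h₁,…,h_N) = γ(f; γ(g₁; h₁,…,h_{N₁}), …, γ(g_k; h_{N_{k-1}+1},…,h_{N_k})), where N_i = n₁ + ⋯ + n_i. -/
open TensorProduct

section Test
variable {K A : Type u} [Field K] [Ring A] [Algebra K A]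

lemma Tpow_induction_on {n : ℕ} {motive : Tpow K A (n+1) → Prop} (t : Tpow K A (n+1))
    (zero : motive 0) (tmul : ∀ (a : A) (u : Tpow K A n), motive (a ⊗ₜ[K] u))
    (add : ∀ x y, motive x → motive y → motive (x + y)) : motive t :=
  by
  induction t using TensorProduct.induction_on with
  | zero => exact zero
  | tmul a u => exact tmul a u
  | add x y hx hy => exact add x y hx hy

lemma tmap_self (n : ℕ) : tmap K A n n = LinearMap.id := by simp [tmap]

lemma tmap_self_apply (n : ℕ) (t : Tpow K A n) : tmap K A n n t = t := by simp [tmap_self]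

lemma tmap_tensor {m n : ℕ} (h : m = n) (a : A) (t : Tpow K A m) :
    tmap K A (m+1) (n+1) (a ⊗ₜ[K] t) = (a ⊗ₜ[K] tmap K A m n t : A ⊗[K] Tpow K A n) := by
  subst h; simp [tmap_self]; rfl

lemma tmap_tmap {a b c : ℕ} (h : a = b) (t : Tpow K A a) :
    tmap K A b c (tmap K A a b t) = tmap K A a c t := by subst h; simp [tmap_self]

lemma tmap_tmap' {a b c : ℕ} (h : b = c) (t : Tpow K A a) :
    tmap K A b c (tmap K A a b t) = tmap K A a c t := by subst h; simp [tmap_self]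

lemma consume_zero (S : ℕ) (h : Tpow K A 0 →ₗ[K] A) :
    consume K A 0 S h = LinearMap.rTensor (Tpow K A S) h := rfl

lemma consume_succ_apply (n S : ℕ) (h : Tpow K A (n+1) →ₗ[K] A) (a : A) (t : Tpow K A (S+n+1)) :
    consume K A (n+1) S h (a ⊗ₜ[K] t) =
      consume K A n S (h ∘ₗ TensorProduct.mk K A (Tpow K A n) a) t := by
  rfl

end Test

section Test
variable {K A : Type u} [Field K] [Ring A] [Algebra K A]

-- congruence for consume across provably-equal indices
lemma consume_congr {j j' S : ℕ} (hj : j = j')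
    (ψ : Tpow K A j →ₗ[K] A) (ψ' : Tpow K A j' →ₗ[K] A)
    (hψ : ∀ u, ψ u = ψ' (tmap K A j j' u))
    (t : Tpow K A (S+j+1)) (t' : Tpow K A (S+j'+1))
    (ht : t' = tmap K A (S+j+1) (S+j'+1) t) :
    consume K A j S ψ t = consume K A j' S ψ' t' := by
  subst hj
  have : ψ = ψ' := by ext u; simpa [tmap_self] using hψ u
  subst this
  simp [ht, tmap_self]

-- post-composition on the produced A factor
lemma rTensor_consume (n S : ℕ) (ψ : A →ₗ[K] A) :
    ∀ (h : Tpow K A n →ₗ[K] A) (t : Tpow K A (S+n+1)),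
    LinearMap.rTensor (Tpow K A S) ψ (consume K A n S h t) = consume K A n S (ψ ∘ₗ h) t := by
  induction n with
  | zero =>
    intro h t
    rw [consume_zero, consume_zero, LinearMap.rTensor_comp]; rfl
  | succ n ih =>
    intro h t
    induction t using Tpow_induction_on with
    | zero => simp
    | tmul a u => rw [consume_succ_apply, consume_succ_apply, ih]; rfl
    | add x y hx hy => simp only [map_add, hx, hy]

end Test

section Test
variable {K A : Type u} [Field K] [Ring A] [Algebra K A]

lemma appendA_succ_apply (n : ℕ) (a a₀ : A) (u : Tpow K A n) :
    appendA K A (n+1) a (a₀ ⊗ₜ[K] u) = a₀ ⊗ₜ[K] (appendA K A n a u) := rfl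

-- appending into a nonempty remainder commutes with consume
lemma consume_append (n S : ℕ) (a : A) :
    ∀ (h : Tpow K A n →ₗ[K] A) (t : Tpow K A (S+n+1)),
    consume K A n (S+1) h (tmap K A (S+n+1+1) (S+1+n+1) (appendA K A (S+n+1) a t))
      = LinearMap.lTensor A (appendA K A S a) (consume K A n S h t) := by
  induction n with
  | zero =>
    intro h t
    show consume K A 0 (S+1) h (tmap K A (S+1+1) (S+1+1) (appendA K A (S+1) a t))
      = LinearMap.lTensor A (appendA K A S a) (consume K A 0 S h t)
    rw [tmap_self_apply, consume_zero, consume_zero]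
    show (LinearMap.rTensor (Tpow K A (S+1)) h) ((LinearMap.lTensor A (appendA K A S a)) t)
      = (LinearMap.lTensor A (appendA K A S a)) ((LinearMap.rTensor (Tpow K A S) h) t)
    induction t using Tpow_induction_on with
    | zero => rfl
    | tmul a₀ u => rfl
    | add x y hx hy => erw [map_add, map_add, map_add, map_add, hx, hy]
  | succ n ih =>
    intro h t
    induction t using Tpow_induction_on with
    | zero => simp
    | tmul a₀ u =>
      show consume K A (n+1) (S+1) h
          (tmap K A (S+n+1+1+1) (S+1+n+1+1) (a₀ ⊗ₜ[K] (appendA K A (S+n+1) a u))) = _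
      erw [tmap_tensor (by omega), consume_succ_apply, ih, consume_succ_apply]
    | add x y hx hy => simp only [map_add, hx, hy]

-- appending the leftover factor
lemma consume_append0 (n : ℕ) (a : A) :
    ∀ (h : Tpow K A n →ₗ[K] A) (t : Tpow K A n),
    consume K A n 0 h (tmap K A (n+1) (0+n+1) (appendA K A n a t)) = h t ⊗ₜ[K] a := by
  induction n with
  | zero =>
    intro h t
    show consume K A 0 0 h (tmap K A 1 1 (appendA K A 0 a t)) = h t ⊗ₜ[K] a
    rw [tmap_self_apply, consume_zero]
    rfl
  | succ n ih =>
    intro h t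
    induction t using Tpow_induction_on with
    | zero => simp; rfl
    | tmul a₀ u =>
      show consume K A (n+1) 0 h
          (tmap K A (n+1+1) (0+n+1+1) (a₀ ⊗ₜ[K] (appendA K A n a u))) = _
      erw [tmap_tensor (by omega), consume_succ_apply, ih]
      rfl
    | add x y hx hy =>
      simp only [map_add, map_add, hx, hy, LinearMap.map_add, TensorProduct.add_tmul]; rfl

end Test

section Test
variable {K A : Type u} [Field K] [Ring A] [Algebra K A]

lemma consume_consume (n : ℕ) : ∀ (m S : ℕ) (Ψ : Tpow K A (m+1) →ₗ[K] A)
    (h : Tpow K A n →ₗ[K] A) (t : Tpow K A (S+m+1+n+1)),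
    consume K A (m+1) S Ψ (consume K A n (S+m+1) h t)
      = consume K A (n+m+1) S
          (Ψ ∘ₗ consume K A n m h ∘ₗ tmap K A (n+m+1) (m+n+1))
          (tmap K A (S+m+1+n+1) (S+(n+m+1)+1) t) := by
  induction n with
  | zero =>
    intro m S Ψ h t
    induction t using Tpow_induction_on with
    | zero => simp; exact map_zero _
    | tmul a u =>
      rw [consume_zero]
      show consume K A (m+1) S Ψ (h a ⊗ₜ[K] u) = _
      rw [consume_succ_apply, tmap_tensor (by omega)]; show _ = consume K A (0+m) S ((Ψ ∘ₗ consume K A 0 m h ∘ₗ tmap K A (0+m+1) (m+0+1)) ∘ₗ TensorProduct.mk K A (Tpow K A (0+m)) a) (tmap K A (S+m+1) (S+(0+m+1)) u)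
      refine consume_congr (by omega) _ _ ?_ _ _ ?_
      · intro w
        show Ψ (h a ⊗ₜ[K] w)
          = Ψ (consume K A 0 m h (tmap K A (0+m+1) (m+0+1) (a ⊗ₜ[K] (tmap K A m (0+m) w))))
        rw [tmap_tensor (by omega), consume_zero]
        show Ψ (h a ⊗ₜ[K] w) = Ψ (h a ⊗ₜ[K] (tmap K A (0+m) (m+0) (tmap K A m (0+m) w)))
        rw [tmap_tmap (by omega)]
        show Ψ (h a ⊗ₜ[K] w) = Ψ (h a ⊗ₜ[K] (tmap K A m m w))
        rw [tmap_self_apply]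
      · rfl
    | add x y hx hy => simp only [map_add]; rw [← hx, ← hy]; exact map_add _ _ _
  | succ n ih =>
    intro m S Ψ h t
    induction t using Tpow_induction_on with
    | zero => simp; exact map_zero _
    | tmul a u =>
      erw [consume_succ_apply, ih, tmap_tensor (by omega), consume_succ_apply]
      refine consume_congr (by omega) _ _ ?_ _ _ ?_
      · intro w
        show Ψ (consume K A n m (h ∘ₗ TensorProduct.mk K A (Tpow K A n) a)
            (tmap K A (n+m+1) (m+n+1) w))
          = Ψ (consume K A (n+1) m h (tmap K A (n+1+m+1) (m+(n+1)+1)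
              (a ⊗ₜ[K] (tmap K A (n+m+1) (n+1+m) w))))
        rw [tmap_tensor (by omega)]; erw [consume_succ_apply]; rw [tmap_tmap (by omega)]
        rfl
      · show tmap K A (S+m+1+n+1) (S+(n+1+m)+1) u
          = tmap K A (S+(n+m+1)+1) (S+(n+1+m)+1) (tmap K A (S+m+1+n+1) (S+(n+m+1)+1) u)
        rw [tmap_tmap (by omega)]
    | add x y hx hy => simp only [map_add]; rw [← hx, ← hy]; exact map_add _ _ _

end Test

section Test
variable {K A : Type u} [Field K] [Ring A] [Algebra K A]

lemma consume_S (n : ℕ) {S S' : ℕ} (hS : S = S') (h : Tpow K A n →ₗ[K] A)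
    (t : Tpow K A (S+n+1)) :
    consume K A n S' h (tmap K A (S+n+1) (S'+n+1) t)
      = LinearMap.lTensor A (tmap K A S S') (consume K A n S h t) := by
  subst hS
  rw [tmap_self_apply, tmap_self]
  simp [LinearMap.lTensor_id]

lemma consume_head {n S : ℕ} (h₁ h₂ : Tpow K A n →ₗ[K] A) (hh : ∀ u, h₁ u = h₂ u)
    (t : Tpow K A (S+n+1)) :
    consume K A n S h₁ t = consume K A n S h₂ t := by
  have : h₁ = h₂ := LinearMap.ext hh
  rw [this]

lemma append_tmap {m n : ℕ} (h : m = n) (a : A) (u : Tpow K A n) :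
    tmap K A (m+1) (n+1) (appendA K A m a (tmap K A n m u)) = appendA K A n a u := by
  subst h; simp [tmap_self]

lemma entry_eq {a b : ℕ} (h : a = b) (g : Tpow K A (a+1) →ₗ[K] A) :
    (⟨a, g⟩ : Entry K A) = ⟨b, g ∘ₗ tmap K A (b+1) (a+1)⟩ := by
  subst h
  congr 1
  ext u
  simp [tmap_self]

lemma gammaAux_cons (n : ℕ) (g : Tpow K A (n+1+1) →ₗ[K] A) (l : List (Entry K A)) :
    gammaAux K A (⟨n+1, g⟩ :: l)
      = LinearMap.lTensor A (gammaAux K A l) ∘ₗ consume K A n (sumA K A l) (innerC K A g) := rfl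

lemma sumA_append (l L : List (Entry K A)) :
    sumA K A (l ++ L) = sumA K A L + sumA K A l := by
  induction l with
  | nil => simp [sumA]
  | cons e l ih =>
    have h1 : sumA K A (e :: (l ++ L)) = sumA K A (l ++ L) + e.1 := rfl
    have h2 : sumA K A (e :: l) = sumA K A l + e.1 := rfl
    rw [show (e :: l) ++ L = e :: (l ++ L) from rfl, h1, h2, ih]
    omega

lemma lTensor_lTensor {P Q R : Type u} [AddCommGroup P] [AddCommGroup Q] [AddCommGroup R]
    [Module K P] [Module K Q] [Module K R] (F : Q →ₗ[K] R) (G : P →ₗ[K] Q) (x : A ⊗[K] P) :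
    LinearMap.lTensor A F (LinearMap.lTensor A G x) = LinearMap.lTensor A (F ∘ₗ G) x := by
  rw [LinearMap.lTensor_comp]; rfl

lemma rT_lT {P Q : Type u} [AddCommGroup P] [AddCommGroup Q] [Module K P] [Module K Q]
    (ψ : A →ₗ[K] A) (F : P →ₗ[K] Q) (x : A ⊗[K] P) :
    LinearMap.rTensor Q ψ (LinearMap.lTensor A F x)
      = LinearMap.lTensor A F (LinearMap.rTensor P ψ x) := by
  induction x using TensorProduct.induction_on with
  | zero => simp
  | tmul a u => simp
  | add x y hx hy => simp only [map_add, hx, hy]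

lemma consume_zero_lTensor (S S' : ℕ) (ψ : Tpow K A 0 →ₗ[K] A)
    (F : Tpow K A S →ₗ[K] Tpow K A S') (x : A ⊗[K] Tpow K A S) :
    consume K A 0 S' ψ (LinearMap.lTensor A F x)
      = LinearMap.lTensor A F (consume K A 0 S ψ x) := by
  induction x using TensorProduct.induction_on with
  | zero => exact rT_lT (show A →ₗ[K] A from ψ) F 0
  | tmul a u => rfl
  | add x y hx hy => exact rT_lT (show A →ₗ[K] A from ψ) F (x + y)

lemma consume_post (n S : ℕ) (ψ : Tpow K A 0 →ₗ[K] A) (h : Tpow K A n →ₗ[K] A)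
    (t : Tpow K A (S+n+1)) :
    consume K A 0 S ψ (consume K A n S h t) = consume K A n S (ψ ∘ₗ h) t :=
  rTensor_consume n S (show A →ₗ[K] A from ψ) h t

end Test

section Test
variable {K A : Type u} [Field K] [Ring A] [Algebra K A]

lemma key (L : List (Entry K A)) (rest : List (Entry K A)) :
    ∀ (n : ℕ) (g : Tpow K A (n+1+1) →ₗ[K] A), (∀ e ∈ rest, 1 ≤ e.1) →
    ∀ (m' : ℕ), sumA K A (⟨n+1,g⟩::rest) = m'+1 →
    ∀ (φ : Tpow K A (rest.length+1) →ₗ[K] A)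
      (t : Tpow K A (sumA K A ((⟨n+1,g⟩::rest) ++ L))),
    consume K A rest.length L.length (φ ∘ₗ appendA K A rest.length 1)
      (tmap K A (((⟨n+1,g⟩::rest)++L).length) (L.length+rest.length+1)
        (gammaAux K A ((⟨n+1,g⟩::rest)++L) t))
    = LinearMap.lTensor A (gammaAux K A L)
        (consume K A m' (sumA K A L)
          (φ ∘ₗ tmap K A ((⟨n+1,g⟩::rest).length) (rest.length+1)
             ∘ₗ gammaAux K A (⟨n+1,g⟩::rest)
             ∘ₗ tmap K A (m'+1) (sumA K A (⟨n+1,g⟩::rest))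
             ∘ₗ appendA K A m' 1)
          (tmap K A (sumA K A ((⟨n+1,g⟩::rest)++L)) (sumA K A L + m' + 1) t)) := by
  induction rest with
  | nil =>
    intro n g hg m' hm φ t
    obtain rfl : n = m' := by
      have h0 : sumA K A [(⟨n+1,g⟩ : Entry K A)] = 0+(n+1) := rfl
      omega
    change Tpow K A (sumA K A L + n + 1) at t
    show consume K A 0 L.length (φ ∘ₗ appendA K A 0 1)
        (tmap K A (L.length+1) (L.length+1)
          (LinearMap.lTensor A (gammaAux K A L)
            (consume K A n (sumA K A L) (innerC K A g) t)))
      = LinearMap.lTensor A (gammaAux K A L)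
          (consume K A n (sumA K A L)
            (φ ∘ₗ tmap K A 1 1 ∘ₗ gammaAux K A [⟨n+1,g⟩]
               ∘ₗ tmap K A (n+1) (0+(n+1)) ∘ₗ appendA K A n 1)
            (tmap K A (sumA K A L+n+1) (sumA K A L+n+1) t))
    erw [tmap_self_apply, tmap_self_apply, consume_zero_lTensor]; rw [consume_post]
    congr 1
    refine consume_head _ _ (fun u => ?_) _
    show φ (appendA K A 0 1 (innerC K A g u))
      = φ (tmap K A 1 1 (LinearMap.lTensor A (LinearMap.id (R := K) (M := Tpow K A 0))
          (consume K A n 0 (innerC K A g) (tmap K A (n+1) (0+n+1) (appendA K A n 1 u)))))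
    erw [consume_append0, tmap_self_apply]
    simp only [LinearMap.lTensor_id, LinearMap.id_coe, id_eq]
    rfl
  | cons e' rest2 ih =>
    intro n g hg m' hm φ t
    obtain ⟨d', g'⟩ := e'
    cases d' with
    | zero =>
      exact absurd (hg ⟨0,g'⟩ (List.mem_cons_self)) (by simp)
    | succ n' =>
      have hg' : ∀ e ∈ rest2, 1 ≤ e.1 := fun e he => hg e (List.mem_cons_of_mem _ he)
      obtain rfl : m' = sumA K A rest2+n'+n+1 := by
        have h1 : sumA K A (⟨n+1,g⟩::⟨n'+1,g'⟩::rest2) = sumA K A rest2+n'+1+n+1 := rfl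
        omega
      have hCp : ∀ s : Tpow K A (sumA K A rest2+n'), (tmap K A ((⟨n'+1,g'⟩::rest2).length) (rest2.length+1) ∘ₗ gammaAux K A (⟨n'+1,g'⟩::rest2) ∘ₗ tmap K A (sumA K A rest2+n'+1) (sumA K A (⟨n'+1,g'⟩::rest2)) ∘ₗ appendA K A (sumA K A rest2+n') 1) s
          = gammaAux K A (⟨n'+1,g'⟩::rest2) (appendA K A (sumA K A rest2+n') 1 s) := by
        intro s
        show tmap K A (rest2.length+1) (rest2.length+1)
            (gammaAux K A (⟨n'+1,g'⟩::rest2)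
              (tmap K A (sumA K A rest2+n'+1) (sumA K A rest2+n'+1) (appendA K A (sumA K A rest2+n') 1 s))) = _
        rw [tmap_self_apply, tmap_self_apply]
      have hBH : ∀ w : Tpow K A (sumA K A rest2+n'+n+1), (φ ∘ₗ tmap K A ((⟨n+1,g⟩::⟨n'+1,g'⟩::rest2).length) ((⟨n'+1,g'⟩::rest2).length+1) ∘ₗ gammaAux K A (⟨n+1,g⟩::⟨n'+1,g'⟩::rest2) ∘ₗ tmap K A (sumA K A rest2+n'+n+1+1) (sumA K A (⟨n+1,g⟩::⟨n'+1,g'⟩::rest2)) ∘ₗ appendA K A (sumA K A rest2+n'+n+1) 1) w = ((φ ∘ₗ LinearMap.lTensor A (tmap K A ((⟨n'+1,g'⟩::rest2).length) (rest2.length+1) ∘ₗ gammaAux K A (⟨n'+1,g'⟩::rest2) ∘ₗ tmap K A (sumA K A rest2+n'+1) (sumA K A (⟨n'+1,g'⟩::rest2)) ∘ₗ appendA K A (sumA K A rest2+n') 1)) ∘ₗ consume K A n (sumA K A rest2+n') (innerC K A g) ∘ₗ tmap K A (n+(sumA K A rest2+n')+1) (sumA K A rest2+n'+n+1)) (tmap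 K A (sumA K A rest2+n'+n+1) (n+(sumA K A rest2+n')+1) w) := by
        intro w
        show φ (tmap K A (rest2.length+1+1) (rest2.length+1+1)
            (LinearMap.lTensor A (gammaAux K A (⟨n'+1,g'⟩::rest2))
              (consume K A n (sumA K A rest2+n'+1) (innerC K A g)
                (tmap K A (sumA K A rest2+n'+n+1+1) (sumA K A rest2+n'+1+n+1)
                  (appendA K A (sumA K A rest2+n'+n+1) 1 w)))))
          = (φ ∘ₗ LinearMap.lTensor A (tmap K A ((⟨n'+1,g'⟩::rest2).length) (rest2.length+1) ∘ₗ gammaAux K A (⟨n'+1,g'⟩::rest2) ∘ₗ tmap K A (sumA K A rest2+n'+1) (sumA K A (⟨n'+1,g'⟩::rest2)) ∘ₗ appendA K A (sumA K A rest2+n') 1)) (consume K A n (sumA K A rest2+n') (innerC K A g)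
              (tmap K A (n+(sumA K A rest2+n')+1) (sumA K A rest2+n'+n+1) (tmap K A (sumA K A rest2+n'+n+1) (n+(sumA K A rest2+n')+1) w)))
        erw [tmap_self_apply, tmap_tmap (by omega), tmap_self_apply, consume_append]
        show φ _ = φ _
        refine congrArg φ ?_
        have hLL : ∀ y : A ⊗[K] Tpow K A (sumA K A rest2+n'),
            LinearMap.lTensor A (gammaAux K A (⟨n'+1,g'⟩::rest2))
              (LinearMap.lTensor A (appendA K A (sumA K A rest2+n') 1) y)
            = LinearMap.lTensor A (tmap K A ((⟨n'+1,g'⟩::rest2).length) (rest2.length+1) ∘ₗ gammaAux K A (⟨n'+1,g'⟩::rest2) ∘ₗ tmap K A (sumA K A rest2+n'+1) (sumA K A (⟨n'+1,g'⟩::rest2)) ∘ₗ appendA K A (sumA K A rest2+n') 1) y := by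
          intro y
          induction y using TensorProduct.induction_on with
          | zero => simp; exact map_zero _
          | tmul a s =>
            show (a ⊗ₜ[K] (gammaAux K A (⟨n'+1,g'⟩::rest2) (appendA K A (sumA K A rest2+n') 1 s))
                : A ⊗[K] Tpow K A (rest2.length+1))
              = a ⊗ₜ[K] ((tmap K A ((⟨n'+1,g'⟩::rest2).length) (rest2.length+1) ∘ₗ gammaAux K A (⟨n'+1,g'⟩::rest2) ∘ₗ tmap K A (sumA K A rest2+n'+1) (sumA K A (⟨n'+1,g'⟩::rest2)) ∘ₗ appendA K A (sumA K A rest2+n') 1) s)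
            rw [hCp s]
          | add x y hx hy => simp only [map_add, hx, hy]; rw [← hx, ← hy]; exact map_add _ _ _
        exact hLL _
      have hR : consume K A (sumA K A rest2+n'+n+1) (sumA K A L) (φ ∘ₗ tmap K A ((⟨n+1,g⟩::⟨n'+1,g'⟩::rest2).length) ((⟨n'+1,g'⟩::rest2).length+1) ∘ₗ gammaAux K A (⟨n+1,g⟩::⟨n'+1,g'⟩::rest2) ∘ₗ tmap K A (sumA K A rest2+n'+n+1+1) (sumA K A (⟨n+1,g⟩::⟨n'+1,g'⟩::rest2)) ∘ₗ appendA K A (sumA K A rest2+n'+n+1) 1) (tmap K A (sumA K A ((⟨n+1,g⟩::⟨n'+1,g'⟩::rest2)++L)) (sumA K A L+(sumA K A rest2+n'+n+1)+1) t)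
          = consume K A (n+(sumA K A rest2+n')+1) (sumA K A L) ((φ ∘ₗ LinearMap.lTensor A (tmap K A ((⟨n'+1,g'⟩::rest2).length) (rest2.length+1) ∘ₗ gammaAux K A (⟨n'+1,g'⟩::rest2) ∘ₗ tmap K A (sumA K A rest2+n'+1) (sumA K A (⟨n'+1,g'⟩::rest2)) ∘ₗ appendA K A (sumA K A rest2+n') 1)) ∘ₗ consume K A n (sumA K A rest2+n') (innerC K A g) ∘ₗ tmap K A (n+(sumA K A rest2+n')+1) (sumA K A rest2+n'+n+1))
              (tmap K A (sumA K A L+(sumA K A rest2+n')+1+n+1) (sumA K A L+(n+(sumA K A rest2+n')+1)+1) (tmap K A (sumA K A L+(sumA K A rest2+n'+n+1)+1) (sumA K A L+(sumA K A rest2+n')+1+n+1) (tmap K A (sumA K A ((⟨n+1,g⟩::⟨n'+1,g'⟩::rest2)++L)) (sumA K A L+(sumA K A rest2+n'+n+1)+1) t))) :=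
        consume_congr (by omega) _ _ hBH _ _ (tmap_tmap (by omega) _)
      erw [hR]; refine Eq.trans ?_ (congrArg (LinearMap.lTensor A (gammaAux K A L)) (consume_consume n (sumA K A rest2+n') (sumA K A L) _ (innerC K A g) _))
      have hXc : (tmap K A (sumA K A L+(sumA K A rest2+n'+n+1)+1) (sumA K A L+(sumA K A rest2+n')+1+n+1) (tmap K A (sumA K A ((⟨n+1,g⟩::⟨n'+1,g'⟩::rest2)++L)) (sumA K A L+(sumA K A rest2+n'+n+1)+1) t)) = tmap K A (sumA K A ((⟨n'+1,g'⟩::rest2)++L)+n+1) (sumA K A L+(sumA K A rest2+n')+1+n+1) t := by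
        have h2 : (tmap K A (sumA K A L+(sumA K A rest2+n'+n+1)+1) (sumA K A L+(sumA K A rest2+n')+1+n+1) (tmap K A (sumA K A ((⟨n+1,g⟩::⟨n'+1,g'⟩::rest2)++L)) (sumA K A L+(sumA K A rest2+n'+n+1)+1) t)) = tmap K A (sumA K A ((⟨n+1,g⟩::⟨n'+1,g'⟩::rest2)++L)) (sumA K A L+(sumA K A rest2+n')+1+n+1) t :=
          tmap_tmap (by
            rw [sumA_append]
            have h3 : sumA K A (⟨n+1,g⟩::⟨n'+1,g'⟩::rest2) = sumA K A rest2+n'+1+n+1 := rfl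
            omega) t
        exact h2
      rw [hXc, consume_S n (show sumA K A ((⟨n'+1,g'⟩::rest2)++L) = sumA K A L+(sumA K A rest2+n')+1 by
          rw [sumA_append]
          have h4 : sumA K A (⟨n'+1,g'⟩::rest2) = sumA K A rest2+n'+1 := rfl
          omega) (innerC K A g) t]
      have hg1 : tmap K A (((⟨n+1,g⟩::⟨n'+1,g'⟩::rest2)++L).length)
            (L.length+(⟨n'+1,g'⟩::rest2).length+1)
            (gammaAux K A ((⟨n+1,g⟩::⟨n'+1,g'⟩::rest2)++L) t)
          = tmap K A ((((⟨n'+1,g'⟩::rest2)++L)).length+1) (L.length+rest2.length+1+1)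
            (LinearMap.lTensor A (gammaAux K A ((⟨n'+1,g'⟩::rest2)++L))
              (consume K A n (sumA K A ((⟨n'+1,g'⟩::rest2)++L)) (innerC K A g) t)) := rfl
      rw [hg1]
      have hfin : ∀ y : A ⊗[K] Tpow K A (sumA K A ((⟨n'+1,g'⟩::rest2)++L)),
          consume K A (rest2.length+1) L.length (φ ∘ₗ appendA K A (rest2.length+1) 1)
            (tmap K A ((((⟨n'+1,g'⟩::rest2)++L)).length+1) (L.length+rest2.length+1+1)
              (LinearMap.lTensor A (gammaAux K A ((⟨n'+1,g'⟩::rest2)++L)) y))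
          = LinearMap.lTensor A (gammaAux K A L)
              (consume K A ((sumA K A rest2+n')+1) (sumA K A L) (φ ∘ₗ LinearMap.lTensor A (tmap K A ((⟨n'+1,g'⟩::rest2).length) (rest2.length+1) ∘ₗ gammaAux K A (⟨n'+1,g'⟩::rest2) ∘ₗ tmap K A (sumA K A rest2+n'+1) (sumA K A (⟨n'+1,g'⟩::rest2)) ∘ₗ appendA K A (sumA K A rest2+n') 1))
                (LinearMap.lTensor A (tmap K A (sumA K A ((⟨n'+1,g'⟩::rest2)++L)) (sumA K A L+(sumA K A rest2+n')+1)) y)) := by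
        intro y
        induction y using TensorProduct.induction_on with
        | zero => repeat erw [map_zero]
        | tmul a s =>
          rw [LinearMap.lTensor_tmul, LinearMap.lTensor_tmul]
          erw [tmap_tensor (show (((⟨n'+1,g'⟩::rest2) ++ L : List (Entry K A))).length = L.length + rest2.length + 1 by
            have hcl : (⟨n'+1,g'⟩ :: rest2 : List (Entry K A)).length = rest2.length + 1 := rfl
            simp only [List.length_append]; omega)]
          erw [consume_succ_apply rest2.length L.length]
          refine Eq.trans ?_ (congrArg (LinearMap.lTensor A (gammaAux K A L)) (consume_succ_apply (sumA K A rest2 + n') (sumA K A L) _ a _).symm)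
          erw [
            consume_head ((φ ∘ₗ appendA K A (rest2.length+1) 1) ∘ₗ
                TensorProduct.mk K A (Tpow K A rest2.length) a)
              ((φ ∘ₗ TensorProduct.mk K A (Tpow K A (rest2.length+1)) a) ∘ₗ
                appendA K A rest2.length 1)
              (fun u => by
                show φ (appendA K A (rest2.length+1) 1 (a ⊗ₜ[K] u))
                  = φ (a ⊗ₜ[K] (appendA K A rest2.length 1 u))
                rw [appendA_succ_apply]; rfl) _,
            consume_head ((φ ∘ₗ LinearMap.lTensor A (tmap K A ((⟨n'+1,g'⟩::rest2).length) (rest2.length+1) ∘ₗ gammaAux K A (⟨n'+1,g'⟩::rest2) ∘ₗ tmap K A (sumA K A rest2+n'+1) (sumA K A (⟨n'+1,g'⟩::rest2)) ∘ₗ appendA K A (sumA K A rest2+n') 1)) ∘ₗ TensorProduct.mk K A (Tpow K A (sumA K A rest2+n')) a)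
              ((φ ∘ₗ TensorProduct.mk K A (Tpow K A (rest2.length+1)) a) ∘ₗ (tmap K A ((⟨n'+1,g'⟩::rest2).length) (rest2.length+1) ∘ₗ gammaAux K A (⟨n'+1,g'⟩::rest2) ∘ₗ tmap K A (sumA K A rest2+n'+1) (sumA K A (⟨n'+1,g'⟩::rest2)) ∘ₗ appendA K A (sumA K A rest2+n') 1))
              (fun u => rfl) _,
            ih n' g' hg' (sumA K A rest2+n') rfl
              (φ ∘ₗ TensorProduct.mk K A (Tpow K A (rest2.length+1)) a) s]
        | add x y hx hy => (repeat erw [map_add]); exact congrArg₂ (· + ·) hx hy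
      exact hfin _

end Test

section Test2
variable {K A : Type u} [Field K] [Ring A] [Algebra K A]

lemma flatten_len : ∀ (ps : List (Entry K A × List (Entry K A))),
    (∀ p ∈ ps, p.2.length = p.1.1) →
    ((ps.map Prod.snd).flatten).length = sumA K A (ps.map Prod.fst)
  | [], _ => rfl
  | p :: ps, h => by
    have ih := flatten_len ps (fun q hq => h q (List.mem_cons_of_mem _ hq))
    have h1 : (((p::ps).map Prod.snd).flatten).length
        = p.2.length + ((ps.map Prod.snd).flatten).length := by
      show (p.2 ++ (ps.map Prod.snd).flatten).length = _
      rw [List.length_append]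
    have h2 : sumA K A ((p::ps).map Prod.fst) = sumA K A (ps.map Prod.fst) + p.1.1 := rfl
    have h3 := h p (List.mem_cons_self)
    omega

lemma sumA_cl : ∀ (ps : List (Entry K A × List (Entry K A))),
    sumA K A (ps.map (fun p => (⟨sumA K A p.2, gammaD K A p.1.1 p.1.2 p.2 (sumA K A p.2 + 1)⟩ : Entry K A))) = sumA K A ((ps.map Prod.snd).flatten)
  | [] => rfl
  | p :: ps => by
    have ih := sumA_cl ps
    have h1 : sumA K A ((p::ps).map (fun p => (⟨sumA K A p.2, gammaD K A p.1.1 p.1.2 p.2 (sumA K A p.2 + 1)⟩ : Entry K A)))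
        = sumA K A (ps.map (fun p => (⟨sumA K A p.2, gammaD K A p.1.1 p.1.2 p.2 (sumA K A p.2 + 1)⟩ : Entry K A))) + sumA K A p.2 := rfl
    have h2 : sumA K A (((p::ps).map Prod.snd).flatten)
        = sumA K A ((ps.map Prod.snd).flatten) + sumA K A p.2 := by
      show sumA K A (p.2 ++ (ps.map Prod.snd).flatten) = _
      rw [sumA_append]
    omega

end Test2

section Test3
variable {K A : Type u} [Field K] [Ring A] [Algebra K A]

lemma minner : ∀ (ps : List (Entry K A × List (Entry K A))),
    (∀ p ∈ ps, 1 ≤ p.1.1 ∧ p.2.length = p.1.1 ∧ ∀ e ∈ p.2, 1 ≤ e.1) →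
    ∀ t : Tpow K A (sumA K A ((ps.map Prod.snd).flatten)),
    gammaAux K A (ps.map Prod.fst)
      (tmap K A (((ps.map Prod.snd).flatten).length) (sumA K A (ps.map Prod.fst))
        (gammaAux K A ((ps.map Prod.snd).flatten) t))
    = tmap K A ((ps.map (fun p => (⟨sumA K A p.2, gammaD K A p.1.1 p.1.2 p.2 (sumA K A p.2 + 1)⟩ : Entry K A))).length) ((ps.map Prod.fst).length)
        (gammaAux K A (ps.map (fun p => (⟨sumA K A p.2, gammaD K A p.1.1 p.1.2 p.2 (sumA K A p.2 + 1)⟩ : Entry K A)))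
          (tmap K A (sumA K A ((ps.map Prod.snd).flatten)) (sumA K A (ps.map (fun p => (⟨sumA K A p.2, gammaD K A p.1.1 p.1.2 p.2 (sumA K A p.2 + 1)⟩ : Entry K A)))) t)) := by
  intro ps
  induction ps with
  | nil =>
    intro _ t
    show tmap K A 0 0 t = tmap K A 0 0 (tmap K A 0 0 t)
    simp only [tmap_self_apply]
  | cons p ps' ih =>
    intro hyp t
    have hp := hyp _ (List.mem_cons_self)
    have hyp' := fun q hq => hyp q (List.mem_cons_of_mem p hq)
    obtain ⟨⟨d, g⟩, bl⟩ := p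
    cases d with
    | zero => have h9 : (1:ℕ) ≤ 0 := hp.1; omega
    | succ n =>
      cases bl with
      | nil => have h9 : (0:ℕ) = n+1 := hp.2.1; omega
      | cons b0 blr =>
        obtain ⟨db, gb⟩ := b0
        cases db with
        | zero => have h9 : (1:ℕ) ≤ 0 := hp.2.2 ⟨0,gb⟩ (List.mem_cons_self); omega
        | succ nb =>
          have hblr : blr.length = n := by
            have h5 : blr.length+1 = n+1 := hp.2.1
            omega
          have hgblr : ∀ e ∈ blr, 1 ≤ e.1 := fun e he => hp.2.2 e (List.mem_cons_of_mem _ he)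
          show LinearMap.lTensor A (gammaAux K A (ps'.map Prod.fst))
              (consume K A n (sumA K A (ps'.map Prod.fst)) (innerC K A g)
                (tmap K A (((⟨nb+1,gb⟩::blr)++((ps'.map Prod.snd).flatten)).length) (sumA K A (ps'.map Prod.fst)+n+1)
                  (gammaAux K A ((⟨nb+1,gb⟩::blr)++((ps'.map Prod.snd).flatten)) t)))
            = tmap K A ((ps'.map (fun p => (⟨sumA K A p.2, gammaD K A p.1.1 p.1.2 p.2 (sumA K A p.2 + 1)⟩ : Entry K A))).length+1) ((ps'.map Prod.fst).length+1)
                (LinearMap.lTensor A (gammaAux K A (ps'.map (fun p => (⟨sumA K A p.2, gammaD K A p.1.1 p.1.2 p.2 (sumA K A p.2 + 1)⟩ : Entry K A))))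
                  (consume K A (sumA K A blr+nb) (sumA K A (ps'.map (fun p => (⟨sumA K A p.2, gammaD K A p.1.1 p.1.2 p.2 (sumA K A p.2 + 1)⟩ : Entry K A)))) (innerC (n := sumA K A blr+nb) K A (gammaD K A (n+1) g (⟨nb+1,gb⟩::blr) (sumA K A (⟨nb+1,gb⟩::blr)+1)))
                    (tmap K A (sumA K A ((⟨nb+1,gb⟩::blr)++((ps'.map Prod.snd).flatten))) (sumA K A (ps'.map (fun p => (⟨sumA K A p.2, gammaD K A p.1.1 p.1.2 p.2 (sumA K A p.2 + 1)⟩ : Entry K A)))+(sumA K A blr+nb)+1) t)))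
          have e1 : tmap K A (((⟨nb+1,gb⟩::blr)++((ps'.map Prod.snd).flatten)).length) (sumA K A (ps'.map Prod.fst)+n+1)
                (gammaAux K A ((⟨nb+1,gb⟩::blr)++((ps'.map Prod.snd).flatten)) t)
              = tmap K A (((ps'.map Prod.snd).flatten).length+n+1) (sumA K A (ps'.map Prod.fst)+n+1)
                  (tmap K A (((⟨nb+1,gb⟩::blr)++((ps'.map Prod.snd).flatten)).length) (((ps'.map Prod.snd).flatten).length+n+1)
                    (gammaAux K A ((⟨nb+1,gb⟩::blr)++((ps'.map Prod.snd).flatten)) t)) :=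
            (tmap_tmap (by have hcl : (⟨nb+1,gb⟩ :: blr : List (Entry K A)).length = blr.length + 1 := rfl; simp only [List.length_append, List.length_cons]; omega) _).symm
          rw [e1, consume_S n (flatten_len ps' (fun q hq => (hyp' q hq).2.1)) (innerC K A g)]
          have e2 : consume K A n (((ps'.map Prod.snd).flatten).length) (innerC K A g)
                (tmap K A (((⟨nb+1,gb⟩::blr)++((ps'.map Prod.snd).flatten)).length) (((ps'.map Prod.snd).flatten).length+n+1)
                  (gammaAux K A ((⟨nb+1,gb⟩::blr)++((ps'.map Prod.snd).flatten)) t))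
              = consume K A blr.length (((ps'.map Prod.snd).flatten).length) ((g ∘ₗ TensorProduct.mk K A (Tpow K A (n+1)) 1 ∘ₗ tmap K A (blr.length+1) (n+1)) ∘ₗ appendA K A blr.length 1)
                  (tmap K A (((⟨nb+1,gb⟩::blr)++((ps'.map Prod.snd).flatten)).length) (((ps'.map Prod.snd).flatten).length+blr.length+1)
                    (gammaAux K A ((⟨nb+1,gb⟩::blr)++((ps'.map Prod.snd).flatten)) t)) := by
            refine (consume_congr hblr.symm _ _ (fun u => ?_) _ _ rfl).trans
              (congrArg _ (tmap_tmap (by have hcl : (⟨nb+1,gb⟩ :: blr : List (Entry K A)).length = blr.length + 1 := rfl; simp only [List.length_append, List.length_cons]; omega) _))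
            show g ((1:A) ⊗ₜ[K] appendA K A n 1 u)
              = g ((1:A) ⊗ₜ[K] tmap K A (blr.length+1) (n+1)
                  (appendA K A blr.length 1 (tmap K A n blr.length u)))
            rw [append_tmap hblr]
          rw [e2, key ((ps'.map Prod.snd).flatten) blr nb gb hgblr (sumA K A blr+nb) rfl (g ∘ₗ TensorProduct.mk K A (Tpow K A (n+1)) 1 ∘ₗ tmap K A (blr.length+1) (n+1)) t]
          have e3 : tmap K A (sumA K A ((⟨nb+1,gb⟩::blr)++((ps'.map Prod.snd).flatten))) (sumA K A (ps'.map (fun p => (⟨sumA K A p.2, gammaD K A p.1.1 p.1.2 p.2 (sumA K A p.2 + 1)⟩ : Entry K A)))+(sumA K A blr+nb)+1) t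
              = tmap K A (sumA K A ((ps'.map Prod.snd).flatten)+(sumA K A blr+nb)+1) (sumA K A (ps'.map (fun p => (⟨sumA K A p.2, gammaD K A p.1.1 p.1.2 p.2 (sumA K A p.2 + 1)⟩ : Entry K A)))+(sumA K A blr+nb)+1)
                  (tmap K A (sumA K A ((⟨nb+1,gb⟩::blr)++((ps'.map Prod.snd).flatten))) (sumA K A ((ps'.map Prod.snd).flatten)+(sumA K A blr+nb)+1) t) :=
            (tmap_tmap (by
              rw [sumA_append]
              have h6 : sumA K A (⟨nb+1,gb⟩::blr) = sumA K A blr+nb+1 := rfl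
              omega) _).symm
          rw [e3, consume_S (sumA K A blr+nb) (show sumA K A ((ps'.map Prod.snd).flatten) = sumA K A (ps'.map (fun p => (⟨sumA K A p.2, gammaD K A p.1.1 p.1.2 p.2 (sumA K A p.2 + 1)⟩ : Entry K A))) from (sumA_cl ps').symm)
              (innerC (n := sumA K A blr+nb) K A (gammaD K A (n+1) g (⟨nb+1,gb⟩::blr) (sumA K A (⟨nb+1,gb⟩::blr)+1)))]
          have hF2 : ∀ u : Tpow K A (sumA K A blr+nb), innerC (n := sumA K A blr+nb) K A (gammaD K A (n+1) g (⟨nb+1,gb⟩::blr) (sumA K A (⟨nb+1,gb⟩::blr)+1)) u = ((g ∘ₗ TensorProduct.mk K A (Tpow K A (n+1)) 1 ∘ₗ tmap K A (blr.length+1) (n+1)) ∘ₗ tmap K A ((⟨nb+1,gb⟩::blr).length) (blr.length+1) ∘ₗ gammaAux K A (⟨nb+1,gb⟩::blr) ∘ₗ tmap K A (sumA K A blr+nb+1) (sumA K A (⟨nb+1,gb⟩::blr)) ∘ₗ appendA K A (sumA K A blr+nb) 1) u := by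
            intro u
            show g (tmap K A (blr.length+1+1) (n+1+1)
                (LinearMap.lTensor A (gammaAux K A (⟨nb+1,gb⟩::blr))
                  (tmap K A (sumA K A blr+nb+1+1) (sumA K A blr+nb+1+1)
                    (((1:A) ⊗ₜ[K] (appendA K A (sumA K A blr+nb) 1 u))
                      : A ⊗[K] Tpow K A (sumA K A (⟨nb+1,gb⟩::blr))))))
              = g ((1:A) ⊗ₜ[K] tmap K A (blr.length+1) (n+1)
                  (tmap K A (blr.length+1) (blr.length+1)
                    (gammaAux K A (⟨nb+1,gb⟩::blr)
                      (tmap K A (sumA K A blr+nb+1) (sumA K A blr+nb+1)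
                        (appendA K A (sumA K A blr+nb) 1 u)))))
            erw [tmap_self_apply, tmap_self_apply, tmap_self_apply, LinearMap.lTensor_tmul,
              tmap_tensor (by omega)]
            rfl
          rw [consume_head (innerC (n := sumA K A blr+nb) K A (gammaD K A (n+1) g (⟨nb+1,gb⟩::blr) (sumA K A (⟨nb+1,gb⟩::blr)+1))) ((g ∘ₗ TensorProduct.mk K A (Tpow K A (n+1)) 1 ∘ₗ tmap K A (blr.length+1) (n+1)) ∘ₗ tmap K A ((⟨nb+1,gb⟩::blr).length) (blr.length+1) ∘ₗ gammaAux K A (⟨nb+1,gb⟩::blr) ∘ₗ tmap K A (sumA K A blr+nb+1) (sumA K A (⟨nb+1,gb⟩::blr)) ∘ₗ appendA K A (sumA K A blr+nb) 1) hF2]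
          have hfin2 : ∀ z : A ⊗[K] Tpow K A (sumA K A ((ps'.map Prod.snd).flatten)),
              LinearMap.lTensor A (gammaAux K A (ps'.map Prod.fst))
                (LinearMap.lTensor A (tmap K A (((ps'.map Prod.snd).flatten).length) (sumA K A (ps'.map Prod.fst)))
                  (LinearMap.lTensor A (gammaAux K A ((ps'.map Prod.snd).flatten)) z))
              = tmap K A ((ps'.map (fun p => (⟨sumA K A p.2, gammaD K A p.1.1 p.1.2 p.2 (sumA K A p.2 + 1)⟩ : Entry K A))).length+1) ((ps'.map Prod.fst).length+1)
                  (LinearMap.lTensor A (gammaAux K A (ps'.map (fun p => (⟨sumA K A p.2, gammaD K A p.1.1 p.1.2 p.2 (sumA K A p.2 + 1)⟩ : Entry K A))))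
                    (LinearMap.lTensor A (tmap K A (sumA K A ((ps'.map Prod.snd).flatten)) (sumA K A (ps'.map (fun p => (⟨sumA K A p.2, gammaD K A p.1.1 p.1.2 p.2 (sumA K A p.2 + 1)⟩ : Entry K A))))) z)) := by
            intro z
            induction z using TensorProduct.induction_on with
            | zero => simp; exact (map_zero _).symm
            | tmul a s =>
              show (a ⊗ₜ[K] gammaAux K A (ps'.map Prod.fst)
                    (tmap K A (((ps'.map Prod.snd).flatten).length) (sumA K A (ps'.map Prod.fst)) (gammaAux K A ((ps'.map Prod.snd).flatten) s))
                  : A ⊗[K] Tpow K A ((ps'.map Prod.fst).length))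
                = tmap K A ((ps'.map (fun p => (⟨sumA K A p.2, gammaD K A p.1.1 p.1.2 p.2 (sumA K A p.2 + 1)⟩ : Entry K A))).length+1) ((ps'.map Prod.fst).length+1)
                    ((a ⊗ₜ[K] gammaAux K A (ps'.map (fun p => (⟨sumA K A p.2, gammaD K A p.1.1 p.1.2 p.2 (sumA K A p.2 + 1)⟩ : Entry K A)))
                        (tmap K A (sumA K A ((ps'.map Prod.snd).flatten)) (sumA K A (ps'.map (fun p => (⟨sumA K A p.2, gammaD K A p.1.1 p.1.2 p.2 (sumA K A p.2 + 1)⟩ : Entry K A)))) s))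
                      : A ⊗[K] Tpow K A ((ps'.map (fun p => (⟨sumA K A p.2, gammaD K A p.1.1 p.1.2 p.2 (sumA K A p.2 + 1)⟩ : Entry K A))).length))
              rw [ih hyp' s]; erw [tmap_tensor ((List.length_map _).trans (List.length_map _).symm)]
            | add x y hx hy => simp only [map_add, hx, hy]; exact (map_add _ _ _).symm
          exact hfin2 _

end Test3


/-- The operad structure maps `γ` on the Hopf-Hochschild cochain modules are
associative: `γ(γ(f; g₁,…,g_k); h₁,…,h_N) = γ(f; γ(g₁; h-block₁), …, γ(g_k; h-block_k))`,
where the `hᵢ` are partitioned into consecutive blocks whose sizes are the degrees of the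
`gᵢ`.  Each `gᵢ` is recorded together with its block of `h`'s. -/
theorem gamma_associative
    {K A H : Type u} [Field K] [Ring A] [Algebra K A] [Ring H] [Bialgebra K H]
    (M : ModAlg K A H) (k : ℕ) (hk : 1 ≤ k)
    (f : Tpow K A (k + 1) →ₗ[K] A) (hf : IsXLinear K A H M.act k f)
    (pairs : List (Entry K A × List (Entry K A)))
    (hlen : pairs.length = k)
    (hdeg : ∀ p ∈ pairs, 1 ≤ p.1.1 ∧ p.2.length = p.1.1 ∧
      IsXLinear K A H M.act p.1.1 p.1.2 ∧
      ∀ e ∈ p.2, 1 ≤ e.1 ∧ IsXLinear K A H M.act e.1 e.2) :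
    gammaD K A (sumA K A (pairs.map Prod.fst))
        (gammaD K A k f (pairs.map Prod.fst) (sumA K A (pairs.map Prod.fst) + 1))
        ((pairs.map Prod.snd).flatten)
        (sumA K A ((pairs.map Prod.snd).flatten) + 1) =
      gammaD K A k f
        (pairs.map fun p =>
          (⟨sumA K A p.2, gammaD K A p.1.1 p.1.2 p.2 (sumA K A p.2 + 1)⟩ : Entry K A))
        (sumA K A ((pairs.map Prod.snd).flatten) + 1) := by
  have hyp3 : ∀ p ∈ pairs, 1 ≤ p.1.1 ∧ p.2.length = p.1.1 ∧ ∀ e ∈ p.2, 1 ≤ e.1 :=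
    fun p hp => ⟨(hdeg p hp).1, (hdeg p hp).2.1, fun e he => ((hdeg p hp).2.2.2 e he).1⟩
  refine LinearMap.ext (fun u => ?_)
  show f (tmap K A ((pairs.map Prod.fst).length+1) (k+1)
      (LinearMap.lTensor A (gammaAux K A (pairs.map Prod.fst))
        (tmap K A (sumA K A (pairs.map Prod.fst)+1) (sumA K A (pairs.map Prod.fst)+1)
          (tmap K A (((pairs.map Prod.snd).flatten).length+1) (sumA K A (pairs.map Prod.fst)+1)
            (LinearMap.lTensor A (gammaAux K A ((pairs.map Prod.snd).flatten))
              (tmap K A (sumA K A ((pairs.map Prod.snd).flatten)+1) (sumA K A ((pairs.map Prod.snd).flatten)+1) u))))))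
    = f (tmap K A ((pairs.map (fun p => (⟨sumA K A p.2, gammaD K A p.1.1 p.1.2 p.2 (sumA K A p.2 + 1)⟩ : Entry K A))).length+1) (k+1)
        (LinearMap.lTensor A (gammaAux K A (pairs.map (fun p => (⟨sumA K A p.2, gammaD K A p.1.1 p.1.2 p.2 (sumA K A p.2 + 1)⟩ : Entry K A))))
          (tmap K A (sumA K A ((pairs.map Prod.snd).flatten)+1) (sumA K A (pairs.map (fun p => (⟨sumA K A p.2, gammaD K A p.1.1 p.1.2 p.2 (sumA K A p.2 + 1)⟩ : Entry K A)))+1) u)))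
  rw [tmap_self_apply, tmap_self_apply]
  induction u using Tpow_induction_on with
  | zero => repeat erw [map_zero]
  | tmul a s =>
    erw [LinearMap.lTensor_tmul,
      tmap_tensor (flatten_len pairs (fun p hp => (hyp3 p hp).2.1)),
      LinearMap.lTensor_tmul,
      tmap_tensor (show (pairs.map Prod.fst).length = k by rw [List.length_map]; omega),
      tmap_tensor ((sumA_cl pairs).symm),
      LinearMap.lTensor_tmul,
      tmap_tensor (show (pairs.map (fun p => (⟨sumA K A p.2, gammaD K A p.1.1 p.1.2 p.2 (sumA K A p.2 + 1)⟩ : Entry K A))).length = k by rw [List.length_map]; omega),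
      minner pairs hyp3 s,
      tmap_tmap (show (pairs.map (fun p => (⟨sumA K A p.2, gammaD K A p.1.1 p.1.2 p.2 (sumA K A p.2 + 1)⟩ : Entry K A))).length = (pairs.map Prod.fst).length by rw [List.length_map, List.length_map])]
  | add x y hx hy => (repeat erw [map_add]); exact congrArg₂ (· + ·) hx hy
end
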